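/- arXiv:math/0307218 — 2 statements merged into one kernel-verified Lean document; each statement's English description precedes it below -/
import Mathlib

section
/- Let B be an ℕ-graded bialgebra over a field such that the degree-zero component is one-dimensional, spanned by the unit. Then B admits an antipode, i.e., B is a Hopf algebra. -/
/-!
In the convolution ring `WithConv (B →ₗ[k] B)` write `id = 1 - ν` with `ν = η ∘ ε - id`.
Connectedness makes `ν` vanish on `B₀`, and since `Δ` respects the grading, `ν ^ (n + 1)`
vanishes on `Bₘ` for `m ≤ n`. So the geometric series `∑ νⁱ` (Takeuchi's formula) is locally
finite, and on `Bₙ` its partial sum `Sₙ = ∑_{i ≤ n} νⁱ` inverts `1 - ν` on both sides because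
`Sₙ (1 - ν) = (1 - ν) Sₙ = 1 - ν ^ (n + 1)`.
-/

open TensorProduct WithConv

namespace DirectSum.IsInternal

variable {ι R M N : Type*} [DecidableEq ι] [Semiring R] [AddCommMonoid M] [Module R M]
  [AddCommMonoid N] [Module R N] {A : ι → Submodule R M}

theorem linearMap_ext (h : IsInternal A) {f g : M →ₗ[R] N}
    (hfg : ∀ i, ∀ x ∈ A i, f x = g x) : f = g :=
  LinearMap.eqLocus_eq_top.mp <| eq_top_iff.mpr <|
    h.submodule_iSup_eq_top ▸ iSup_le fun i x hx => hfg i x hx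

noncomputable def lift (h : IsInternal A) (φ : ∀ i, A i →ₗ[R] N) : M →ₗ[R] N :=
  toModule R ι N φ ∘ₗ (LinearEquiv.ofBijective (coeLinearMap A) h).symm.toLinearMap

theorem lift_apply_of_mem (h : IsInternal A) (φ : ∀ i, A i →ₗ[R] N) {i : ι} {x : M}
    (hx : x ∈ A i) : h.lift φ x = φ i ⟨x, hx⟩ := by
  have : (LinearEquiv.ofBijective (coeLinearMap A) h).symm x = lof R ι (A ·) i ⟨x, hx⟩ :=
    (LinearEquiv.symm_apply_eq _).mpr (coeLinearMap_of A i ⟨x, hx⟩).symm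
  simp [lift, this, toModule_lof]

end DirectSum.IsInternal

theorem LinearMap.eq_of_mem_biSup_range {ι R N P : Type*} {M : ι → Type*} [CommSemiring R]
    [∀ i, AddCommMonoid (M i)] [∀ i, Module R (M i)] [AddCommMonoid N] [Module R N]
    [AddCommMonoid P] [Module R P] {p : ι → Prop} {φ : ∀ i, M i →ₗ[R] N} {T T' : N →ₗ[R] P}
    (h : ∀ i, p i → T ∘ₗ φ i = T' ∘ₗ φ i) {z : N} (hz : z ∈ ⨆ (i) (_ : p i), range (φ i)) :
    T z = T' z :=
  (iSup₂_le fun i hi => by rintro _ ⟨y, rfl⟩; exact LinearMap.congr_fun (h i hi) y :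
    _ ≤ LinearMap.eqLocus T T') hz

section GradedBialgebra

variable {k B : Type*} [CommRing k] [Ring B] [Bialgebra k B] (𝒜 : ℕ → Submodule k B)

def IsGradedComul : Prop :=
  ∀ n : ℕ, ∀ x ∈ 𝒜 n, Coalgebra.comul (R := k) x ∈
    ⨆ i ∈ Finset.range (n + 1), LinearMap.range (map (𝒜 i).subtype (𝒜 (n - i)).subtype)

variable {𝒜}

theorem convMul_apply_eq_of_mem (hΔ : IsGradedComul 𝒜) {f g f' g' : WithConv (B →ₗ[k] B)}
    {n : ℕ} {x : B} (hx : x ∈ 𝒜 n)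
    (h : ∀ i ≤ n, ∀ a ∈ 𝒜 i, ∀ b ∈ 𝒜 (n - i), f a * g b = f' a * g' b) :
    (f * g) x = (f' * g') x := by
  refine LinearMap.eq_of_mem_biSup_range (T := LinearMap.mul' k B ∘ₗ map f.ofConv g.ofConv)
    (T' := LinearMap.mul' k B ∘ₗ map f'.ofConv g'.ofConv) (fun i hi => ?_) (hΔ n x hx)
  ext a b
  simpa using h i (Finset.mem_range_succ_iff.mp hi) a a.2 b b.2

theorem one_sub_id_apply_of_mem_zero (hconn : 𝒜 0 = Submodule.span k {(1 : B)}) {x : B}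
    (hx : x ∈ 𝒜 0) : (1 - toConv LinearMap.id : WithConv (B →ₗ[k] B)) x = 0 := by
  obtain ⟨c, rfl⟩ := Submodule.mem_span_singleton.mp (hconn ▸ hx)
  simp [Algebra.algebraMap_eq_smul_one]

theorem one_sub_id_pow_apply_eq_zero (hconn : 𝒜 0 = Submodule.span k {(1 : B)})
    (hΔ : IsGradedComul 𝒜) {m j : ℕ} (hmj : m < j) {x : B} (hx : x ∈ 𝒜 m) :
    ((1 - toConv LinearMap.id) ^ j : WithConv (B →ₗ[k] B)) x = 0 := by
  induction j generalizing m x with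
  | zero => omega
  | succ j ih =>
    rw [pow_succ, convMul_apply_eq_of_mem hΔ (f' := 0) (g' := 0) hx, zero_mul]
    · simp
    intro i hi a ha b hb
    rcases hi.lt_or_eq with hi | rfl
    · simp [ih (by omega) ha]
    · rw [Nat.sub_self] at hb
      rw [one_sub_id_apply_of_mem_zero hconn hb]
      simp

variable (k B) in
noncomputable def partialAntipode (n : ℕ) : WithConv (B →ₗ[k] B) :=
  ∑ i ∈ Finset.range (n + 1), (1 - toConv LinearMap.id) ^ i

theorem partialAntipode_mul_id (n : ℕ) :
    partialAntipode k B n * toConv LinearMap.id = 1 - (1 - toConv LinearMap.id) ^ (n + 1) := by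
  have := geom_sum_mul_neg (1 - toConv LinearMap.id : WithConv (B →ₗ[k] B)) (n + 1)
  rwa [sub_sub_cancel] at this

theorem id_mul_partialAntipode (n : ℕ) :
    toConv LinearMap.id * partialAntipode k B n = 1 - (1 - toConv LinearMap.id) ^ (n + 1) := by
  have := mul_neg_geom_sum (1 - toConv LinearMap.id : WithConv (B →ₗ[k] B)) (n + 1)
  rwa [sub_sub_cancel] at this

theorem partialAntipode_apply_of_le (hconn : 𝒜 0 = Submodule.span k {(1 : B)})
    (hΔ : IsGradedComul 𝒜) {m n : ℕ} (hmn : m ≤ n) {x : B} (hx : x ∈ 𝒜 m) :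
    partialAntipode k B n x = partialAntipode k B m x := by
  have htail : (∑ j ∈ Finset.Ico (m + 1) (n + 1),
      (1 - toConv LinearMap.id) ^ j : WithConv (B →ₗ[k] B)) x = 0 := by
    rw [ofConv_sum, LinearMap.sum_apply]
    exact Finset.sum_eq_zero fun j hj =>
      one_sub_id_pow_apply_eq_zero hconn hΔ (Finset.mem_Ico.mp hj).1 hx
  rw [partialAntipode, ← Finset.sum_range_add_sum_Ico _ (by omega : m + 1 ≤ n + 1), ofConv_add,
    LinearMap.add_apply, htail, add_zero]
  rfl

variable (hint : DirectSum.IsInternal 𝒜)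

noncomputable def gradedAntipode : B →ₗ[k] B :=
  hint.lift fun n => (partialAntipode k B n).ofConv ∘ₗ (𝒜 n).subtype

theorem gradedAntipode_apply_of_le (hconn : 𝒜 0 = Submodule.span k {(1 : B)})
    (hΔ : IsGradedComul 𝒜) {m n : ℕ} (hmn : m ≤ n) {x : B} (hx : x ∈ 𝒜 m) :
    gradedAntipode hint x = partialAntipode k B n x := by
  rw [gradedAntipode, hint.lift_apply_of_mem _ hx, partialAntipode_apply_of_le hconn hΔ hmn hx]
  rfl

theorem gradedAntipode_mul_id (hconn : 𝒜 0 = Submodule.span k {(1 : B)})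
    (hΔ : IsGradedComul 𝒜) : toConv (gradedAntipode hint) * toConv LinearMap.id = 1 := by
  refine ofConv_injective <| hint.linearMap_ext fun n x hx => ?_
  calc (toConv (gradedAntipode hint) * toConv LinearMap.id : WithConv (B →ₗ[k] B)) x
      = (partialAntipode k B n * toConv LinearMap.id : WithConv (B →ₗ[k] B)) x :=
        convMul_apply_eq_of_mem hΔ hx fun i hi a ha b _ => by
          rw [gradedAntipode_apply_of_le hint hconn hΔ hi ha]
    _ = (1 : WithConv (B →ₗ[k] B)) x := by
        rw [partialAntipode_mul_id, ofConv_sub, LinearMap.sub_apply,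
          one_sub_id_pow_apply_eq_zero hconn hΔ n.lt_succ_self hx, sub_zero]

theorem id_mul_gradedAntipode (hconn : 𝒜 0 = Submodule.span k {(1 : B)})
    (hΔ : IsGradedComul 𝒜) : toConv LinearMap.id * toConv (gradedAntipode hint) = 1 := by
  refine ofConv_injective <| hint.linearMap_ext fun n x hx => ?_
  calc (toConv LinearMap.id * toConv (gradedAntipode hint) : WithConv (B →ₗ[k] B)) x
      = (toConv LinearMap.id * partialAntipode k B n : WithConv (B →ₗ[k] B)) x :=
        convMul_apply_eq_of_mem hΔ hx fun i _ a _ b hb => by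
          rw [gradedAntipode_apply_of_le hint hconn hΔ (n.sub_le i) hb]
    _ = (1 : WithConv (B →ₗ[k] B)) x := by
        rw [id_mul_partialAntipode, ofConv_sub, LinearMap.sub_apply,
          one_sub_id_pow_apply_eq_zero hconn hΔ n.lt_succ_self hx, sub_zero]

end GradedBialgebra

theorem stmt6_general {k B : Type*} [Field k] [Ring B] [Bialgebra k B]
    (𝒜 : ℕ → Submodule k B) (hint : DirectSum.IsInternal 𝒜)
    (hconn : 𝒜 0 = Submodule.span k {(1 : B)})
    (hΔ : ∀ n : ℕ, ∀ x ∈ 𝒜 n,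
      Coalgebra.comul (R := k) x ∈
        ⨆ i ∈ Finset.range (n + 1),
          LinearMap.range (TensorProduct.map (𝒜 i).subtype (𝒜 (n - i)).subtype)) :
    ∃ S : B →ₗ[k] B,
      (∀ x : B, LinearMap.mul' k B (TensorProduct.map S LinearMap.id
          (Coalgebra.comul (R := k) x)) = algebraMap k B (Coalgebra.counit x)) ∧
      (∀ x : B, LinearMap.mul' k B (TensorProduct.map LinearMap.id S
          (Coalgebra.comul (R := k) x)) = algebraMap k B (Coalgebra.counit x)) :=
  ⟨gradedAntipode hint, fun x => congr($(gradedAntipode_mul_id hint hconn hΔ) x),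
    fun x => congr($(id_mul_gradedAntipode hint hconn hΔ) x)⟩

/-- A connected ℕ-graded bialgebra over a field (degree-zero component spanned by the
unit, multiplication and comultiplication respecting the grading) admits an antipode,
i.e. a two-sided convolution inverse of the identity. -/
theorem stmt6 {k B : Type*} [Field k] [Ring B] [Bialgebra k B]
    (𝒜 : ℕ → Submodule k B) (hint : DirectSum.IsInternal 𝒜)
    (hgm : SetLike.GradedMonoid 𝒜)
    (hconn : 𝒜 0 = Submodule.span k {(1 : B)})
    (hΔ : ∀ n : ℕ, ∀ x ∈ 𝒜 n,
      Coalgebra.comul (R := k) x ∈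
        ⨆ i ∈ Finset.range (n + 1),
          LinearMap.range (TensorProduct.map (𝒜 i).subtype (𝒜 (n - i)).subtype)) :
    ∃ S : B →ₗ[k] B,
      (∀ x : B, LinearMap.mul' k B (TensorProduct.map S LinearMap.id
          (Coalgebra.comul (R := k) x)) = algebraMap k B (Coalgebra.counit x)) ∧
      (∀ x : B, LinearMap.mul' k B (TensorProduct.map LinearMap.id S
          (Coalgebra.comul (R := k) x)) = algebraMap k B (Coalgebra.counit x)) :=
  stmt6_general 𝒜 hint hconn hΔ
end

section
/- If Δ : A → A ⊗ A is the deconcatenation coproduct on the tensor algebra T(V) (sum over all splittings of a word into a prefix and suffix) and ⧢ is the shuffle product, then (T(V), ⧢, Δ) is a bialgebra: Δ(u ⧢ w) = Δ(u) ⧢ Δ(w), where the product on T(V)⊗T(V) is the componentwise shuffle product. -/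
variable {ι K : Type*} [Field K]

/-- The (unsigned) shuffle product of two words, as an element of the free module
on words: the sum over all `(p,q)`-shuffles of the interleaved words. -/
noncomputable def wordShuffle : List ι → List ι → (List ι →₀ K)
  | [], w => Finsupp.single w 1
  | a :: u, [] => Finsupp.single (a :: u) 1
  | a :: u, b :: w =>
      Finsupp.mapDomain (List.cons a) (wordShuffle u (b :: w)) +
      Finsupp.mapDomain (List.cons b) (wordShuffle (a :: u) w)
  termination_by u w => u.length + w.length
  decreasing_by all_goals simp

/-- The bilinear extension of the shuffle product to `T(V)`. -/
noncomputable def shuffleMul (x y : List ι →₀ K) : List ι →₀ K :=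
  x.sum fun u cu => y.sum fun w cw => (cu * cw) • wordShuffle u w

/-- The deconcatenation coproduct on `T(V)`: the sum over all splittings of a word
into a prefix and a suffix, with `T(V) ⊗ T(V)` modelled as the free module on pairs
of words. -/
noncomputable def decat (x : List ι →₀ K) : List ι × List ι →₀ K :=
  x.sum fun l c => ∑ i ∈ Finset.range (l.length + 1),
    Finsupp.single (l.take i, l.drop i) c

/-- The componentwise shuffle product on `T(V) ⊗ T(V)`. -/
noncomputable def shuffleMul2 (x y : List ι × List ι →₀ K) : List ι × List ι →₀ K :=
  x.sum fun p cp => y.sum fun q cq => (cp * cq) •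
    ((wordShuffle p.1 q.1).sum fun u cu => (wordShuffle p.2 q.2).sum fun w cw =>
      Finsupp.single (u, w) (cu * cw))

/-! All three operations are (bi)linear, so it suffices to check `Δ(p ⧢ q) = Δp ⧢ Δq` on words.
This goes by induction on `|p| + |q|`: the shuffle recursion `au ⧢ bw = a(u ⧢ bw) + b(au ⧢ w)`
matches `Δ(ax) = [] ⊗ ax + (a· ⊗ id) Δx`, since prepending a letter to the left tensor factor
obeys the same recursion for the componentwise product, and commutes with shuffling by `[] ⊗ x`. -/

open Finsupp

theorem Finsupp.linearCombination_linearCombination_apply {R α β M : Type*} [CommSemiring R]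
    [AddCommMonoid M] [Module R M] (f : α → β → M) (x : α →₀ R) (y : β →₀ R) :
    linearCombination R (fun a => linearCombination R (f a)) x y =
      x.sum fun a c => y.sum fun b d => (c * d) • f a b := by
  simp [linearCombination_apply, LinearMap.finsupp_sum_apply, Finsupp.smul_sum, mul_smul]

theorem wordShuffle_nil_left (w : List ι) :
    (wordShuffle [] w : List ι →₀ K) = single w 1 := by
  rw [wordShuffle]

theorem wordShuffle_nil_right (p : List ι) :
    (wordShuffle p [] : List ι →₀ K) = single p 1 := by
  cases p <;> rw [wordShuffle]

noncomputable def prepend (a : ι) : (List ι →₀ K) →ₗ[K] List ι →₀ K :=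
  lmapDomain K K (List.cons a)

noncomputable def prependLeft (a : ι) : (List ι × List ι →₀ K) →ₗ[K] List ι × List ι →₀ K :=
  lmapDomain K K (Prod.map (List.cons a) id)

@[simp]
theorem prepend_single (a : ι) (l : List ι) (c : K) :
    prepend a (single l c) = single (a :: l) c :=
  mapDomain_single

@[simp]
theorem prependLeft_single (a : ι) (s t : List ι) (c : K) :
    prependLeft a (single (s, t) c) = single (a :: s, t) c :=
  mapDomain_single

theorem wordShuffle_cons_cons (a b : ι) (u w : List ι) :
    (wordShuffle (a :: u) (b :: w) : List ι →₀ K) =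
      prepend a (wordShuffle u (b :: w)) + prepend b (wordShuffle (a :: u) w) := by
  rw [wordShuffle]; rfl

noncomputable def shuffleBilin : (List ι →₀ K) →ₗ[K] (List ι →₀ K) →ₗ[K] List ι →₀ K :=
  linearCombination K fun u => linearCombination K (wordShuffle u)

theorem shuffleBilin_apply (x y : List ι →₀ K) : shuffleBilin x y = shuffleMul x y :=
  linearCombination_linearCombination_apply _ x y

@[simp]
theorem shuffleBilin_single_single (u w : List ι) :
    shuffleBilin (single u (1 : K)) (single w 1) = wordShuffle u w := by
  simp [shuffleBilin]

noncomputable def wordTmul :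
    (List ι →₀ K) →ₗ[K] (List ι →₀ K) →ₗ[K] List ι × List ι →₀ K :=
  linearCombination K fun s => linearCombination K fun t => single (s, t) 1

theorem wordTmul_apply (x y : List ι →₀ K) :
    wordTmul x y = x.sum fun s c => y.sum fun t d => single (s, t) (c * d) := by
  simp [wordTmul, linearCombination_linearCombination_apply]

@[simp]
theorem wordTmul_single_single (s t : List ι) (c d : K) :
    wordTmul (single s c) (single t d) = single (s, t) (c * d) := by
  simp [wordTmul_apply]

theorem wordTmul_prepend_left (a : ι) (x y : List ι →₀ K) :
    wordTmul (prepend a x) y = prependLeft a (wordTmul x y) := by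
  have h : (wordTmul : (List ι →₀ K) →ₗ[K] _) ∘ₗ prepend a =
      wordTmul.compr₂ (prependLeft a) := by
    ext s t
    simp
  exact LinearMap.congr_fun₂ h x y

noncomputable def shuffleBilin₂ :
    (List ι × List ι →₀ K) →ₗ[K] (List ι × List ι →₀ K) →ₗ[K] List ι × List ι →₀ K :=
  linearCombination K fun P => linearCombination K fun Q =>
    wordTmul (wordShuffle P.1 Q.1) (wordShuffle P.2 Q.2)

theorem shuffleBilin₂_apply (X Y : List ι × List ι →₀ K) :
    shuffleBilin₂ X Y = shuffleMul2 X Y := by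
  simp [shuffleBilin₂, shuffleMul2, linearCombination_linearCombination_apply, wordTmul_apply]

@[simp]
theorem shuffleBilin₂_single_single (P Q : List ι × List ι) :
    shuffleBilin₂ (single P (1 : K)) (single Q 1) =
      wordTmul (wordShuffle P.1 Q.1) (wordShuffle P.2 Q.2) := by
  simp [shuffleBilin₂]

theorem shuffleBilin₂_one_left (Y : List ι × List ι →₀ K) :
    shuffleBilin₂ (single ([], []) 1) Y = Y := by
  have h : shuffleBilin₂ (single (([] : List ι), ([] : List ι)) (1 : K)) =
      LinearMap.id := by
    ext ⟨s, t⟩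
    simp [wordShuffle_nil_left]
  exact LinearMap.congr_fun h Y

theorem shuffleBilin₂_one_right (X : List ι × List ι →₀ K) :
    shuffleBilin₂ X (single ([], []) 1) = X := by
  have h : shuffleBilin₂.flip (single (([] : List ι), ([] : List ι)) (1 : K)) =
      LinearMap.id := by
    ext ⟨s, t⟩
    simp [wordShuffle_nil_right]
  exact LinearMap.congr_fun h X

theorem shuffleBilin₂_nil_prependLeft (s : List ι) (b : ι) (Y : List ι × List ι →₀ K) :
    shuffleBilin₂ (single ([], s) 1) (prependLeft b Y) =
      prependLeft b (shuffleBilin₂ (single ([], s) 1) Y) := by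
  have h : shuffleBilin₂ (single ([], s) (1 : K)) ∘ₗ prependLeft b =
      prependLeft b ∘ₗ shuffleBilin₂ (single ([], s) 1) := by
    ext ⟨s', t'⟩
    simp [wordShuffle_nil_left, ← wordTmul_prepend_left]
  exact LinearMap.congr_fun h Y

theorem shuffleBilin₂_prependLeft_nil (a : ι) (t : List ι) (X : List ι × List ι →₀ K) :
    shuffleBilin₂ (prependLeft a X) (single ([], t) 1) =
      prependLeft a (shuffleBilin₂ X (single ([], t) 1)) := by
  have h : shuffleBilin₂.flip (single ([], t) (1 : K)) ∘ₗ prependLeft a =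
      prependLeft a ∘ₗ shuffleBilin₂.flip (single ([], t) 1) := by
    ext ⟨s', t'⟩
    simp [wordShuffle_nil_right, ← wordTmul_prepend_left]
  exact LinearMap.congr_fun h X

theorem shuffleBilin₂_prependLeft_prependLeft (a b : ι) (X Y : List ι × List ι →₀ K) :
    shuffleBilin₂ (prependLeft a X) (prependLeft b Y) =
      prependLeft a (shuffleBilin₂ X (prependLeft b Y)) +
        prependLeft b (shuffleBilin₂ (prependLeft a X) Y) := by
  have h : shuffleBilin₂.compl₁₂ (prependLeft a) (prependLeft b) =
      (shuffleBilin₂.compl₂ (prependLeft b)).compr₂ (prependLeft a) +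
        (shuffleBilin₂ ∘ₗ prependLeft a).compr₂ (prependLeft (K := K) b) := by
    ext ⟨s, t⟩ ⟨s', t'⟩
    simp [wordShuffle_cons_cons, wordTmul_prepend_left]
  exact LinearMap.congr_fun₂ h X Y

noncomputable def decatLin : (List ι →₀ K) →ₗ[K] List ι × List ι →₀ K :=
  linearCombination K fun l =>
    ∑ i ∈ Finset.range (l.length + 1), single (l.take i, l.drop i) 1

theorem decatLin_apply (x : List ι →₀ K) : decatLin x = decat x := by
  simp [decatLin, decat, linearCombination_apply, Finset.smul_sum]

theorem decatLin_single_nil :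
    decatLin (single ([] : List ι) (1 : K)) = single ([], []) 1 := by
  simp [decatLin]

theorem decatLin_prepend (a : ι) (x : List ι →₀ K) :
    decatLin (prepend a x) =
      wordTmul (single [] 1) (prepend a x) + prependLeft a (decatLin x) := by
  have h : decatLin ∘ₗ prepend a =
      wordTmul (single [] 1) ∘ₗ prepend a +
        prependLeft a ∘ₗ (decatLin : (List ι →₀ K) →ₗ[K] _) := by
    ext l
    simp [decatLin, Finset.sum_range_succ']
    abel
  exact LinearMap.congr_fun h x

theorem decatLin_single_cons (a : ι) (l : List ι) :
    decatLin (single (a :: l) (1 : K)) =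
      single ([], a :: l) 1 + prependLeft a (decatLin (single l 1)) := by
  simpa using decatLin_prepend a (single l (1 : K))

theorem decatLin_wordShuffle : ∀ p q : List ι,
    decatLin (wordShuffle p q : List ι →₀ K) =
      shuffleBilin₂ (decatLin (single p 1)) (decatLin (single q 1))
  | [], q => by simp [wordShuffle_nil_left, decatLin_single_nil, shuffleBilin₂_one_left]
  | p, [] => by simp [wordShuffle_nil_right, decatLin_single_nil, shuffleBilin₂_one_right]
  | a :: u, b :: w => by
    rw [wordShuffle_cons_cons, map_add, decatLin_prepend, decatLin_prepend,
      decatLin_wordShuffle u (b :: w), decatLin_wordShuffle (a :: u) w]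
    simp only [decatLin_single_cons, map_add, LinearMap.add_apply,
      shuffleBilin₂_prependLeft_prependLeft, shuffleBilin₂_nil_prependLeft,
      shuffleBilin₂_prependLeft_nil, shuffleBilin₂_single_single, wordShuffle_nil_left,
      wordShuffle_cons_cons]
    abel

theorem decatLin_shuffleBilin (x y : List ι →₀ K) :
    decatLin (shuffleBilin x y) = shuffleBilin₂ (decatLin x) (decatLin y) := by
  have h : shuffleBilin.compr₂ decatLin =
      shuffleBilin₂.compl₁₂ decatLin (decatLin : (List ι →₀ K) →ₗ[K] _) := by
    ext p q : 4
    simpa using decatLin_wordShuffle (K := K) p q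
  exact LinearMap.congr_fun₂ h x y

/-- Bialgebra compatibility of the shuffle product and the deconcatenation coproduct:
`Δ(u ⧢ w) = Δ(u) ⧢ Δ(w)`. -/
theorem stmt10 (u w : List ι →₀ K) :
    decat (shuffleMul u w) = shuffleMul2 (decat u) (decat w) := by
  simpa only [shuffleBilin_apply, decatLin_apply, shuffleBilin₂_apply] using
    decatLin_shuffleBilin u w
end
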